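/- arXiv:2412.16465 — 2 statements merged into one kernel-verified Lean document; each statement's English description precedes it below -/
import Mathlib

section
/- Let G be a matching covered bipartite graph with bipartition (A, B) and |E(G)| ≥ 2. An edge uv with u ∈ A, v ∈ B is not removable in G if and only if there exist nonempty proper subsets A₁ ⊆ A and B₁ ⊆ B such that the induced subgraph G[A₁ ∪ B₁] is matching covered, u ∈ A₁, v ∈ B \ B₁, and the only edge between A₁ and B \ B₁ is uv. -/
open SimpleGraph

universe u

/-- A graph has a perfect matching. -/
def HasPM {V : Type u} (G : SimpleGraph V) : Prop :=
  ∃ M : G.Subgraph, M.IsPerfectMatching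

/-- A connected graph with at least two vertices in which every edge
lies in a perfect matching. -/
def MatchingCovered {V : Type u} (G : SimpleGraph V) : Prop :=
  G.Connected ∧ 2 ≤ Nat.card V ∧
    ∀ e ∈ G.edgeSet, ∃ M : G.Subgraph, M.IsPerfectMatching ∧ e ∈ M.edgeSet

/-- Number of odd connected components. -/
noncomputable def oddComps {V : Type u} (G : SimpleGraph V) : ℕ :=
  Nat.card {c : G.ConnectedComponent // Odd (Nat.card c.supp)}

/-- An edge is removable if its deletion leaves a matching covered graph. -/
def Removable {V : Type u} (G : SimpleGraph V) (e : Sym2 V) : Prop :=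
  e ∈ G.edgeSet ∧ MatchingCovered (G.deleteEdges {e})

/-- Removable, with absent edges counted as removable. -/
def RemovableExt {V : Type u} (G : SimpleGraph V) (e : Sym2 V) : Prop :=
  e ∉ G.edgeSet ∨ Removable G e

/-- Degree of a vertex. -/
noncomputable def degN {V : Type u} (G : SimpleGraph V) (v : V) : ℕ :=
  Nat.card (G.neighborSet v)

/-- A graph on at least four vertices is bicritical if deleting any two
distinct vertices leaves a graph with a perfect matching. -/
def Bicritical {V : Type u} (G : SimpleGraph V) : Prop :=
  4 ≤ Nat.card V ∧ ∀ u v : V, u ≠ v → HasPM (G.induce ({u, v}ᶜ : Set V))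

/-- A barrier: nonempty set `B` with `o(G - B) = |B|`. -/
def IsBarrier {V : Type u} (G : SimpleGraph V) (B : Set V) : Prop :=
  B.Nonempty ∧ oddComps (G.induce (Bᶜ : Set V)) = B.ncard

/-- 2-connectedness. -/
def TwoConnected {V : Type u} (G : SimpleGraph V) : Prop :=
  3 ≤ Nat.card V ∧ ∀ s : Set V, s.ncard ≤ 1 → (G.induce (sᶜ : Set V)).Connected

/-- 3-connectedness. -/
def ThreeConnected {V : Type u} (G : SimpleGraph V) : Prop :=
  4 ≤ Nat.card V ∧ ∀ s : Set V, s.ncard ≤ 2 → (G.induce (sᶜ : Set V)).Connected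

/-- A brick is a 3-connected bicritical graph. -/
def IsBrick {V : Type u} (G : SimpleGraph V) : Prop :=
  ThreeConnected G ∧ Bicritical G

/-- Map a vertex to the vertex set of the contraction `G/X`. -/
noncomputable def toContract {V : Type u} (X : Set V) (v : V) : ↥(Xᶜ) ⊕ Unit := by
  classical exact if h : v ∈ X then Sum.inr () else Sum.inl ⟨v, h⟩

/-- Contraction `G/X` of the set `X` to a single vertex. -/
noncomputable def contract {V : Type u} (G : SimpleGraph V) (X : Set V) :
    SimpleGraph (↥(Xᶜ) ⊕ Unit) :=
  SimpleGraph.fromRel (fun a b =>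
    ∃ x y, G.Adj x y ∧ a = toContract X x ∧ b = toContract X y)

/-- The edge cut `∂(X)`. -/
def cutEdges {V : Type u} (G : SimpleGraph V) (X : Set V) : Set (Sym2 V) :=
  {e | e ∈ G.edgeSet ∧ ∃ x y, e = s(x, y) ∧ x ∈ X ∧ y ∉ X}

/-- A tight cut: every perfect matching meets it in exactly one edge. -/
def IsTightCut {V : Type u} (G : SimpleGraph V) (X : Set V) : Prop :=
  ∀ M : G.Subgraph, M.IsPerfectMatching → (cutEdges G X ∩ M.edgeSet).ncard = 1

/-- A separating cut: both contractions are matching covered. -/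
def IsSeparatingCut {V : Type u} (G : SimpleGraph V) (X : Set V) : Prop :=
  MatchingCovered (contract G X) ∧ MatchingCovered (contract G Xᶜ)

/-- `(A, B)` is a bipartition of `G`. -/
def IsBipartition {V : Type u} (G : SimpleGraph V) (A B : Set V) : Prop :=
  A ∪ B = Set.univ ∧ A ∩ B = ∅ ∧
    ∀ u v : V, G.Adj u v → (u ∈ A ∧ v ∈ B) ∨ (u ∈ B ∧ v ∈ A)

/-- A P-set of a bipartite matching covered graph with bipartition `(A, B)`. -/
def IsPSet {V : Type u} (G : SimpleGraph V) (A B X : Set V) : Prop :=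
  (X ∩ A).ncard = (X ∩ B).ncard ∧
    ((∃! p : V × V, p.1 ∈ X ∩ A ∧ p.2 ∈ B \ X ∧ G.Adj p.1 p.2) ∨
     (∃! p : V × V, p.1 ∈ A \ X ∧ p.2 ∈ X ∩ B ∧ G.Adj p.1 p.2))

/-!
Write `G' = G - uv` and `N'(T)` for the neighbourhood of a vertex set `T` in `G'`. In a matching
covered bipartite graph no nonempty proper subset `T` of `A` has `|N(T)| ≤ |T|`: every perfect
matching would map `T` onto `N(T)`, so no edge could leave `T ∪ N(T)`.

If `A₁` and `B₁` exist, then `N'(A₁) ⊆ B₁` and `|A₁| = |B₁|`, as `G[A₁ ∪ B₁]` has a perfect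
matching; so `A₁` violates this in `G'`, which is therefore not matching covered.

Conversely, `uv` is not a bridge: the component of `u` in `G'` would have odd size exactly for
the perfect matchings containing `uv`, yet another edge at `u` or `v` lies in a perfect matching
avoiding `uv`. So if `G'` is not matching covered, some edge `ab` of `G'` lies in no perfect
matching of `G'`, and Hall's theorem for `A - a` and `B - b` gives a tight `T ⊆ A - a`, that
is, `|N'(T)| ≤ |T|`; such a `T` must contain `u`. By submodularity of `|N'(·)|` the tight sets
containing `u` are closed under intersection. The least one, `A₁`, with `B₁ = N'(A₁)` does the
job: by the same Hall argument every edge of `G'` leaving `A₁` lies in a perfect matching of `G'`,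
which restricts to `G[A₁ ∪ B₁]`, and minimality also makes `G[A₁ ∪ B₁]` connected.
-/

theorem exists_isLeast_of_inter_mem {α : Type*} [Finite α] {P : Set α → Prop} {s : Set α}
    (hs : P s) (hP : ∀ t t', P t → P t' → P (t ∩ t')) : ∃ m, IsLeast {t | P t} m := by
  obtain ⟨m, hm⟩ := exists_minimal_of_wellFoundedLT P ⟨s, hs⟩
  exact ⟨m, hm.prop, fun t ht =>
    (hm.2 (hP _ _ hm.prop ht) Set.inter_subset_left).trans Set.inter_subset_right⟩

namespace SimpleGraph

variable {V : Type*} {G : SimpleGraph V}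

def nbhd (G : SimpleGraph V) (S : Set V) : Set V := {y | ∃ x ∈ S, G.Adj x y}

@[simp]
lemma mem_nbhd {S : Set V} {y : V} : y ∈ G.nbhd S ↔ ∃ x ∈ S, G.Adj x y := Iff.rfl

lemma nbhd_mono {S T : Set V} (h : S ⊆ T) : G.nbhd S ⊆ G.nbhd T :=
  fun _ ⟨x, hx, hxy⟩ => ⟨x, h hx, hxy⟩

lemma nbhd_union (S T : Set V) : G.nbhd (S ∪ T) = G.nbhd S ∪ G.nbhd T := by
  ext y
  simp only [mem_nbhd, Set.mem_union, or_and_right, exists_or]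

lemma nbhd_subset_nbhd_deleteEdges {T : Set V} {u v : V} (hu : u ∉ T) (hv : v ∉ T) :
    G.nbhd T ⊆ (G.deleteEdges {s(u, v)}).nbhd T := by
  rintro y ⟨x, hx, hxy⟩
  refine ⟨x, hx, deleteEdges_adj.mpr ⟨hxy, fun h => ?_⟩⟩
  rcases Sym2.eq_iff.mp h with ⟨rfl, -⟩ | ⟨rfl, -⟩
  exacts [hu hx, hv hx]

lemma nbhd_subset_insert_nbhd_deleteEdges {T : Set V} {u v : V} (hv : v ∉ T) :
    G.nbhd T ⊆ insert v ((G.deleteEdges {s(u, v)}).nbhd T) := by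
  rintro y ⟨x, hx, hxy⟩
  by_cases h : s(x, y) = s(u, v)
  · rcases Sym2.eq_iff.mp h with ⟨-, rfl⟩ | ⟨rfl, -⟩
    exacts [Set.mem_insert _ _, absurd hx hv]
  · exact Or.inr ⟨x, hx, deleteEdges_adj.mpr ⟨hxy, h⟩⟩

lemma induce_deleteEdges_of_notMem {X : Set V} {u v : V} (hv : v ∉ X) :
    (G.deleteEdges {s(u, v)}).induce X = G.induce X := by
  ext ⟨x, hx⟩ ⟨y, hy⟩
  simp only [comap_adj, Function.Embedding.coe_subtype, deleteEdges_adj, Set.mem_singleton_iff,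
    and_iff_left_iff_imp]
  intro _ h
  rcases Sym2.eq_iff.mp h with ⟨-, rfl⟩ | ⟨rfl, -⟩
  exacts [hv hy, hv hx]

lemma Reachable.mem_of_adj_mem {S : Set V} (hS : ∀ ⦃x y⦄, G.Adj x y → x ∈ S → y ∈ S)
    {x y : V} (hxy : G.Reachable x y) (hx : x ∈ S) : y ∈ S := by
  obtain ⟨w⟩ := hxy
  induction w with
  | nil => exact hx
  | cons h _ ih => exact ih (hS h hx)

namespace IsBipartiteWith

variable {A B : Set V}

lemma mono {H : SimpleGraph V} (hG : G.IsBipartiteWith A B) (hHG : H ≤ G) :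
    H.IsBipartiteWith A B :=
  ⟨hG.disjoint, fun _ _ h => hG.mem_of_adj (hHG h)⟩

lemma induce (hG : G.IsBipartiteWith A B) (X : Set V) :
    (G.induce X).IsBipartiteWith (Subtype.val ⁻¹' A) (Subtype.val ⁻¹' B) :=
  ⟨hG.disjoint.preimage _, fun _ _ hxy => hG.mem_of_adj hxy⟩

lemma nbhd_subset {S : Set V} (hG : G.IsBipartiteWith A B) (hS : S ⊆ A) : G.nbhd S ⊆ B := by
  rintro y ⟨x, hx, hxy⟩
  exact hG.mem_of_mem_adj (hS hx) hxy

end IsBipartiteWith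

namespace Subgraph.IsPerfectMatching

variable {M : G.Subgraph} (hM : M.IsPerfectMatching)
include hM

noncomputable def partner (x : V) : V := (hM.1 (hM.2 x)).choose

lemma adj_partner (x : V) : M.Adj x (hM.partner x) := (hM.1 (hM.2 x)).choose_spec.1

lemma partner_eq_of_adj {x y : V} (h : M.Adj x y) : hM.partner x = y :=
  ((hM.1 (hM.2 x)).choose_spec.2 y h).symm

lemma partner_involutive : Function.Involutive hM.partner :=
  fun x => hM.partner_eq_of_adj (hM.adj_partner x).symm

lemma partner_injective : Function.Injective hM.partner := hM.partner_involutive.injective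

lemma even_ncard_of_partner_mem [Finite V] {S : Set V} (hS : ∀ x ∈ S, hM.partner x ∈ S) :
    Even S.ncard := by
  classical
  have : Fintype V := Fintype.ofFinite V
  have hmatch : (M.induce S).IsMatching := fun x hx =>
    ⟨hM.partner x, ⟨hx, hS x hx, hM.adj_partner x⟩,
      fun y hy => (hM.partner_eq_of_adj hy.2.2).symm⟩
  simpa [Set.ncard_eq_toFinset_card'] using hmatch.even_card

lemma ncard_le_ncard_nbhd [Finite V] (S : Set V) : S.ncard ≤ (G.nbhd S).ncard := by
  rw [← Set.ncard_image_of_injective S hM.partner_injective]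
  refine Set.ncard_le_ncard ?_ (Set.toFinite _)
  rintro _ ⟨x, hx, rfl⟩
  exact ⟨x, hx, M.adj_sub (hM.adj_partner x)⟩

lemma image_partner_eq_nbhd [Finite V] {S : Set V} (hS : (G.nbhd S).ncard ≤ S.ncard) :
    hM.partner '' S = G.nbhd S := by
  refine Set.eq_of_subset_of_ncard_le ?_ ?_ (Set.toFinite _)
  · rintro _ ⟨x, hx, rfl⟩
    exact ⟨x, hx, M.adj_sub (hM.adj_partner x)⟩
  · rwa [Set.ncard_image_of_injective S hM.partner_injective]

lemma partner_mem_of_mem_nbhd [Finite V] {S : Set V} (hS : (G.nbhd S).ncard ≤ S.ncard) {y : V}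
    (hy : y ∈ G.nbhd S) : hM.partner y ∈ S := by
  rw [← hM.image_partner_eq_nbhd hS] at hy
  obtain ⟨x, hx, rfl⟩ := hy
  rwa [hM.partner_involutive]

lemma ncard_eq_of_isBipartiteWith [Finite V] {A B : Set V} (hG : G.IsBipartiteWith A B) :
    A.ncard = B.ncard := by
  have maps {A B : Set V} (hG : G.IsBipartiteWith A B) : A.ncard ≤ B.ncard := by
    rw [← Set.ncard_image_of_injective A hM.partner_injective]
    refine Set.ncard_le_ncard ?_ (Set.toFinite _)
    rintro _ ⟨x, hx, rfl⟩
    exact hG.mem_of_mem_adj hx (M.adj_sub (hM.adj_partner x))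
  exact (maps hG).antisymm (maps hG.symm)

lemma ncard_nbhd_inter_le [Finite V] {S T : Set V} (hS : (G.nbhd S).ncard ≤ S.ncard)
    (hT : (G.nbhd T).ncard ≤ T.ncard) : (G.nbhd (S ∩ T)).ncard ≤ (S ∩ T).ncard := by
  have hinter : (G.nbhd (S ∩ T)).ncard ≤ (G.nbhd S ∩ G.nbhd T).ncard :=
    Set.ncard_le_ncard (Set.subset_inter (nbhd_mono Set.inter_subset_left)
      (nbhd_mono Set.inter_subset_right)) (Set.toFinite _)
  have hunion := hM.ncard_le_ncard_nbhd (S ∪ T)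
  rw [nbhd_union] at hunion
  have := Set.ncard_union_add_ncard_inter S T
  have := Set.ncard_union_add_ncard_inter (G.nbhd S) (G.nbhd T)
  omega

lemma mem_edgeSet_iff_odd_of_isBridge [Finite V] {u v : V} (hbr : G.IsBridge s(u, v)) :
    s(u, v) ∈ M.edgeSet ↔ Odd {x | (G.deleteEdges {s(u, v)}).Reachable u x}.ncard := by
  set C := {x | (G.deleteEdges {s(u, v)}).Reachable u x}
  have hvC : v ∉ C := isBridge_iff.mp hbr
  have hstep : ∀ x ∈ C, s(x, hM.partner x) ≠ s(u, v) → hM.partner x ∈ C := fun x hx hne =>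
    hx.trans (SimpleGraph.deleteEdges_adj.mpr ⟨M.adj_sub (hM.adj_partner x), hne⟩).reachable
  by_cases huv : s(u, v) ∈ M.edgeSet
  · have hpu : hM.partner u = v := hM.partner_eq_of_adj huv
    -- `C` minus `u` is closed under the matching, as the partner of `u` lies outside `C`
    have heven : Even (C \ {u}).ncard := hM.even_ncard_of_partner_mem fun x ⟨hxC, hxu⟩ => by
      have hxv : x ≠ v := fun h => hvC (h ▸ hxC)
      refine ⟨hstep x hxC fun h => ?_, fun h => hxv ?_⟩
      · rcases Sym2.eq_iff.mp h with ⟨h1, -⟩ | ⟨h1, -⟩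
        exacts [hxu h1, hxv h1]
      · rw [← hpu, ← Set.mem_singleton_iff.mp h, hM.partner_involutive]
    rw [← Set.ncard_sdiff_singleton_add_one (show u ∈ C from Reachable.refl u)]
    simpa [huv] using heven.add_one
  · simp only [huv, false_iff, Nat.not_odd_iff_even]
    exact hM.even_ncard_of_partner_mem fun x hx => hstep x hx fun h => huv (h ▸ hM.adj_partner x)

lemma exists_isPerfectMatching_induce {X : Set V} (hX : ∀ x ∈ X, hM.partner x ∈ X) :
    ∃ N : (G.induce X).Subgraph, N.IsPerfectMatching ∧ ∀ x y : X, M.Adj x y → N.Adj x y := by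
  refine ⟨M.comap (Embedding.induce X).toHom, Subgraph.isPerfectMatching_iff.mpr fun x => ?_,
    fun x y h => ⟨M.adj_sub h, h⟩⟩
  refine ⟨⟨hM.partner x, hX x x.2⟩, ⟨M.adj_sub (hM.adj_partner x), hM.adj_partner x⟩, ?_⟩
  exact fun y hy => Subtype.ext (hM.partner_eq_of_adj hy.2).symm

lemma exists_isPerfectMatching_deleteEdges {e : Sym2 V} (he : e ∉ M.edgeSet) :
    ∃ N : (G.deleteEdges {e}).Subgraph, N.IsPerfectMatching :=
  ⟨{ verts := M.verts
     Adj := M.Adj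
     adj_sub := fun h => SimpleGraph.deleteEdges_adj.mpr ⟨M.adj_sub h, fun h' => he (h' ▸ h)⟩
     edge_vert := M.edge_vert
     symm := M.symm }, hM.1, hM.2⟩

lemma exists_isLeast_ncard_nbhd_le [Finite V] {A B : Set V} (hG : G.IsBipartiteWith A B) {u : V}
    (hu : u ∈ A) : ∃ S, IsLeast {T | T ⊆ A ∧ u ∈ T ∧ (G.nbhd T).ncard ≤ T.ncard} S :=
  exists_isLeast_of_inter_mem (P := fun T => T ⊆ A ∧ u ∈ T ∧ (G.nbhd T).ncard ≤ T.ncard)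
    ⟨subset_rfl, hu, (Set.ncard_le_ncard (hG.nbhd_subset subset_rfl)).trans
      (hM.ncard_eq_of_isBipartiteWith hG).ge⟩
    fun _ _ hS hT => ⟨Set.inter_subset_left.trans hS.1, ⟨hS.2.1, hT.2.1⟩,
      hM.ncard_nbhd_inter_le hS.2.2 hT.2.2⟩

lemma connected_induce_union_nbhd [Finite V] {S : Set V} {u : V} (hu : u ∈ S)
    (hS : (G.nbhd S).ncard ≤ S.ncard)
    (hleast : ∀ T ⊆ S, u ∈ T → (G.nbhd T).ncard ≤ T.ncard → S ⊆ T) :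
    (G.induce (S ∪ G.nbhd S)).Connected := by
  set X := S ∪ G.nbhd S
  have huX : u ∈ X := Or.inl hu
  set R : Set V := {x | ∃ hx : x ∈ X, (G.induce X).Reachable ⟨u, huX⟩ ⟨x, hx⟩}
  have hstep : ∀ x ∈ R, ∀ y ∈ X, G.Adj x y → y ∈ R := by
    rintro x ⟨hxX, hx⟩ y hyX hxy
    exact ⟨hyX, hx.trans (Adj.reachable (show (G.induce X).Adj ⟨x, hxX⟩ ⟨y, hyX⟩ from hxy))⟩
  have hpartner : ∀ y ∈ G.nbhd S ∩ R, hM.partner y ∈ S ∩ R := fun y ⟨hy, hyR⟩ =>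
    ⟨hM.partner_mem_of_mem_nbhd hS hy, hstep y hyR _ (Or.inl (hM.partner_mem_of_mem_nbhd hS hy))
      (M.adj_sub (hM.adj_partner y))⟩
  -- the part of `S` reachable from `u` is again tight, hence all of `S`
  have hSR : S ⊆ R := by
    refine (hleast (S ∩ R) Set.inter_subset_left ⟨hu, huX, Reachable.refl _⟩ ?_).trans
      Set.inter_subset_right
    calc (G.nbhd (S ∩ R)).ncard ≤ (G.nbhd S ∩ R).ncard :=
          Set.ncard_le_ncard fun y ⟨x, ⟨hxS, hxR⟩, hxy⟩ =>
            ⟨⟨x, hxS, hxy⟩, hstep x hxR y (Or.inr ⟨x, hxS, hxy⟩) hxy⟩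
      _ = (hM.partner '' (G.nbhd S ∩ R)).ncard :=
          (Set.ncard_image_of_injective _ hM.partner_injective).symm
      _ ≤ (S ∩ R).ncard := Set.ncard_le_ncard (Set.image_subset_iff.mpr hpartner)
  have hXR : X ⊆ R := Set.union_subset hSR fun y hy =>
    hstep _ (hSR (hM.partner_mem_of_mem_nbhd hS hy)) y (Or.inr hy)
      (M.adj_sub (hM.adj_partner y)).symm
  rw [connected_iff_exists_forall_reachable]
  exact ⟨⟨u, huX⟩, fun x => (hXR x.2).2⟩

end Subgraph.IsPerfectMatching

section Hall

variable [Finite V] {A B : Set V}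

lemma exists_isPerfectMatching_of_injOn (hbip : G.IsBipartiteWith A B)
    (hcov : A ∪ B = Set.univ) (hcard : B.ncard ≤ A.ncard) {f : V → V} (hf : Set.InjOn f A)
    (hadj : ∀ x ∈ A, G.Adj x (f x)) :
    ∃ M : G.Subgraph, M.IsPerfectMatching ∧ ∀ x ∈ A, M.Adj x (f x) := by
  have hmaps : Set.MapsTo f A B := fun x hx => hbip.mem_of_mem_adj hx (hadj x hx)
  have himage : f '' A = B := Set.eq_of_subset_of_ncard_le hmaps.image_subset
    (by rwa [hf.ncard_image]) (Set.toFinite _)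
  let M : G.Subgraph :=
    { verts := Set.univ
      Adj := fun x y => (x ∈ A ∧ f x = y) ∨ (y ∈ A ∧ f y = x)
      adj_sub := by
        rintro x y (⟨hx, rfl⟩ | ⟨hy, rfl⟩)
        exacts [hadj x hx, (hadj y hy).symm]
      edge_vert := fun _ => trivial
      symm := ⟨fun _ _ => Or.symm⟩ }
  refine ⟨M, Subgraph.isPerfectMatching_iff.mpr fun z => ?_, fun x hx => Or.inl ⟨hx, rfl⟩⟩
  by_cases hz : z ∈ A
  · refine ⟨f z, Or.inl ⟨hz, rfl⟩, ?_⟩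
    rintro y (⟨-, rfl⟩ | ⟨hy, rfl⟩)
    · rfl
    · exact absurd (hmaps hy) (hbip.disjoint.notMem_of_mem_left hz)
  · have hzB : z ∈ B := ((hcov ▸ Set.mem_univ z : z ∈ A ∪ B)).resolve_left hz
    obtain ⟨y, hy, rfl⟩ := himage ▸ hzB
    refine ⟨y, Or.inr ⟨hy, rfl⟩, ?_⟩
    rintro y' (⟨hy', -⟩ | ⟨hy', hfy⟩)
    · exact absurd hy' hz
    · exact hf hy' hy hfy

lemma exists_isPerfectMatching_adj_of_injective (hbip : G.IsBipartiteWith A B)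
    (hcov : A ∪ B = Set.univ) (hcard : B.ncard ≤ A.ncard) {a b : V} (ha : a ∈ A)
    (hab : G.Adj a b) {f : ↥(A \ {a}) → V} (hf : Function.Injective f)
    (hft : ∀ x : ↥(A \ {a}), G.Adj x (f x) ∧ f x ≠ b) :
    ∃ M : G.Subgraph, M.IsPerfectMatching ∧ M.Adj a b := by
  classical
  let g : V → V := fun x => if hx : x ∈ A \ {a} then f ⟨x, hx⟩ else b
  have hga : g a = b := dif_neg fun h => h.2 rfl
  have hg : ∀ x (hx : x ∈ A \ {a}), g x = f ⟨x, hx⟩ := fun x hx => dif_pos hx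
  have hginj : Set.InjOn g A := by
    intro x hx y hy hxy
    by_cases hxa : x = a <;> by_cases hya : y = a
    · rw [hxa, hya]
    · subst hxa; rw [hga, hg y ⟨hy, hya⟩] at hxy; exact absurd hxy.symm (hft _).2
    · subst hya; rw [hga, hg x ⟨hx, hxa⟩] at hxy; exact absurd hxy (hft _).2
    · rw [hg x ⟨hx, hxa⟩, hg y ⟨hy, hya⟩] at hxy
      exact congrArg Subtype.val (hf hxy)
  have hgadj : ∀ x ∈ A, G.Adj x (g x) := by
    intro x hx
    by_cases hxa : x = a
    · subst hxa; rw [hga]; exact hab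
    · rw [hg x ⟨hx, hxa⟩]; exact (hft ⟨x, hx, hxa⟩).1
  obtain ⟨M, hM, hMg⟩ := exists_isPerfectMatching_of_injOn hbip hcov hcard hginj hgadj
  exact ⟨M, hM, hga ▸ hMg a ha⟩

lemma exists_ncard_nbhd_le_of_forall_notMem_edgeSet (hbip : G.IsBipartiteWith A B)
    (hcov : A ∪ B = Set.univ) (hcard : B.ncard ≤ A.ncard) {a b : V} (ha : a ∈ A)
    (hab : G.Adj a b) (hno : ∀ M : G.Subgraph, M.IsPerfectMatching → s(a, b) ∉ M.edgeSet) :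
    ∃ T ⊆ A, a ∉ T ∧ T.Nonempty ∧ (G.nbhd T).ncard ≤ T.ncard := by
  classical
  have : Fintype V := Fintype.ofFinite V
  let t : ↥(A \ {a}) → Finset V := fun x => {y | G.Adj x y ∧ y ≠ b}
  by_cases hhall : ∀ s : Finset ↥(A \ {a}), s.card ≤ (s.biUnion t).card
  · obtain ⟨f, hfinj, hft⟩ := (Finset.all_card_le_biUnion_card_iff_existsInjective' t).mp hhall
    simp only [t, Finset.mem_filter_univ] at hft
    obtain ⟨M, hM, hMab⟩ :=
      exists_isPerfectMatching_adj_of_injective hbip hcov hcard ha hab hfinj hft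
    exact absurd hMab (hno M hM)
  · push Not at hhall
    obtain ⟨s, hs⟩ := hhall
    have hTcard : (Subtype.val '' (s : Set ↥(A \ {a}))).ncard = s.card := by
      rw [Set.ncard_image_of_injective _ Subtype.val_injective, Set.ncard_coe_finset]
    refine ⟨Subtype.val '' (s : Set ↥(A \ {a})), ?_, ?_, ?_, ?_⟩
    · rintro _ ⟨x, -, rfl⟩; exact x.2.1
    · rintro ⟨x, -, hx⟩; exact x.2.2 hx
    · exact Set.nonempty_of_ncard_ne_zero (by omega)
    · have hsub : G.nbhd (Subtype.val '' (s : Set ↥(A \ {a}))) ⊆ ↑(s.biUnion t) ∪ {b} := by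
        rintro y ⟨_, ⟨x, hx, rfl⟩, hxy⟩
        by_cases hyb : y = b
        · exact Or.inr hyb
        · exact Or.inl (Finset.mem_biUnion.mpr ⟨x, hx, by simp [t, hxy, hyb]⟩)
      have := (Set.ncard_le_ncard hsub (Set.toFinite _)).trans (Set.ncard_union_le _ _)
      rw [Set.ncard_coe_finset, Set.ncard_singleton] at this
      omega

lemma IsBipartiteWith.forall_mem_edgeSet_induce_union_nbhd {S : Set V}
    (hbip : G.IsBipartiteWith A B) (hSA : S ⊆ A) (hS : (G.nbhd S).ncard ≤ S.ncard)
    (hedge : ∀ x ∈ S, ∀ y, G.Adj x y →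
      ∃ M : G.Subgraph, M.IsPerfectMatching ∧ s(x, y) ∈ M.edgeSet) :
    ∀ e ∈ (G.induce (S ∪ G.nbhd S)).edgeSet, ∃ N : (G.induce (S ∪ G.nbhd S)).Subgraph,
      N.IsPerfectMatching ∧ e ∈ N.edgeSet := by
  have hfromS : ∀ p q : ↥(S ∪ G.nbhd S), (p : V) ∈ S → G.Adj p q →
      ∃ N : (G.induce (S ∪ G.nbhd S)).Subgraph, N.IsPerfectMatching ∧ N.Adj p q := by
    intro p q hp hpq
    obtain ⟨M, hM, hpqM⟩ := hedge p hp q hpq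
    obtain ⟨N, hN, hMN⟩ := hM.exists_isPerfectMatching_induce (X := S ∪ G.nbhd S) fun x hx =>
      hx.elim (fun hx => Or.inr ⟨x, hx, M.adj_sub (hM.adj_partner x)⟩)
        (fun hx => Or.inl (hM.partner_mem_of_mem_nbhd hS hx))
    exact ⟨N, hN, hMN p q hpqM⟩
  rintro ⟨p, q⟩ (hpq : G.Adj p q)
  rcases p.2 with hp | hp
  · exact hfromS p q hp hpq
  · have hqA : (q : V) ∈ A := hbip.symm.mem_of_mem_adj (hbip.nbhd_subset hSA hp) hpq
    have hq : (q : V) ∈ S := q.2.resolve_right fun hq =>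
      hbip.disjoint.notMem_of_mem_left hqA (hbip.nbhd_subset hSA hq)
    obtain ⟨N, hN, hqp⟩ := hfromS q p hq hpq.symm
    exact ⟨N, hN, hqp.symm⟩

end Hall

end SimpleGraph

namespace MatchingCovered

variable {V : Type*} [Finite V] {G : SimpleGraph V} {A B : Set V} {u v : V}

theorem exists_isPerfectMatching (hG : MatchingCovered G) :
    ∃ M : G.Subgraph, M.IsPerfectMatching := by
  obtain ⟨hconn, hcard, hmc⟩ := hG
  have : Nontrivial V := Finite.one_lt_card_iff_nontrivial.mp hcard
  obtain ⟨v⟩ := hconn.nonempty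
  obtain ⟨w, hvw⟩ := G.mem_support.mp (hconn.preconnected.support_eq_univ ▸ Set.mem_univ v)
  obtain ⟨M, hM, -⟩ := hmc s(v, w) hvw
  exact ⟨M, hM⟩

theorem ncard_inter_eq_of_isBipartiteWith {X : Set V} (hX : MatchingCovered (G.induce X))
    (hbip : G.IsBipartiteWith A B) : (A ∩ X).ncard = (B ∩ X).ncard := by
  obtain ⟨M, hM⟩ := hX.exists_isPerfectMatching
  have hval (C : Set V) : (Subtype.val ⁻¹' C : Set X).ncard = (C ∩ X).ncard := by
    rw [← Set.ncard_preimage_of_injective_subset_range Subtype.val_injective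
      (by simp : C ∩ X ⊆ Set.range (Subtype.val : X → V))]
    simp
  rw [← hval, ← hval]
  exact hM.ncard_eq_of_isBipartiteWith (hbip.induce X)

theorem eq_of_ncard_nbhd_le {S : Set V} (hG : MatchingCovered G) (hbip : G.IsBipartiteWith A B)
    (hSA : S ⊆ A) (hS : S.Nonempty) (hle : (G.nbhd S).ncard ≤ S.ncard) : S = A := by
  obtain ⟨hconn, -, hmc⟩ := hG
  obtain ⟨s, hs⟩ := hS
  -- a perfect matching through `xy` with `x ∈ N(S)` matches `x` into `S`, and so `y ∈ S`
  have hclosed : ∀ ⦃x y⦄, G.Adj x y → x ∈ S ∪ G.nbhd S → y ∈ S ∪ G.nbhd S := by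
    rintro x y hxy (hx | hx)
    · exact Or.inr ⟨x, hx, hxy⟩
    · obtain ⟨M, hM, hxyM⟩ := hmc s(x, y) hxy
      rw [← hM.image_partner_eq_nbhd hle] at hx
      obtain ⟨z, hz, rfl⟩ := hx
      rw [← hM.partner_eq_of_adj (Subgraph.mem_edgeSet.mp hxyM), hM.partner_involutive]
      exact Or.inl hz
  refine hSA.antisymm fun z hz => ?_
  rcases (hconn.preconnected s z).mem_of_adj_mem hclosed (Or.inl hs) with h | h
  · exact h
  · exact absurd (hbip.nbhd_subset hSA h) (hbip.disjoint.notMem_of_mem_left hz)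

theorem connected_deleteEdges (hG : MatchingCovered G) (hE : 2 ≤ G.edgeSet.ncard)
    (huv : G.Adj u v) : (G.deleteEdges {s(u, v)}).Connected := by
  obtain ⟨hconn, -, hmc⟩ := hG
  refine hconn.connected_delete_edge_of_not_isBridge fun hbr => ?_
  obtain ⟨x, w, hx, hxw, hne⟩ : ∃ x w, (x = u ∨ x = v) ∧ G.Adj x w ∧ s(x, w) ≠ s(u, v) := by
    by_contra! h
    have hends : ∀ z, z = u ∨ z = v := by
      refine fun z => (hconn.preconnected u z).mem_of_adj_mem (S := {z | z = u ∨ z = v})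
        (fun x y hxy hx => ?_) (Or.inl rfl)
      rcases Sym2.eq_iff.mp (h x y hx hxy) with ⟨-, h2⟩ | ⟨-, h2⟩
      exacts [Or.inr h2, Or.inl h2]
    have hsub : G.edgeSet ⊆ {s(u, v)} := by
      rintro ⟨x, y⟩ hxy
      exact h x y (hends x) hxy
    have := Set.ncard_le_ncard hsub
    simp only [Set.ncard_singleton] at this
    omega
  obtain ⟨M₁, hM₁, huvM₁⟩ := hmc s(u, v) huv
  obtain ⟨M₂, hM₂, hxwM₂⟩ := hmc s(x, w) hxw
  have huvM₂ : s(u, v) ∉ M₂.edgeSet := fun huvM₂ => by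
    rcases hx with rfl | rfl
    · obtain rfl : w = v := hM₂.1.eq_of_adj_left hxwM₂ huvM₂
      exact hne rfl
    · obtain rfl : w = u := hM₂.1.eq_of_adj_left hxwM₂ (M₂.adj_symm huvM₂)
      exact hne Sym2.eq_swap
  exact huvM₂ ((hM₂.mem_edgeSet_iff_odd_of_isBridge hbr).mpr
    ((hM₁.mem_edgeSet_iff_odd_of_isBridge hbr).mp huvM₁))

theorem exists_isPerfectMatching_deleteEdges (hG : MatchingCovered G)
    (hE : 2 ≤ G.edgeSet.ncard) (huv : G.Adj u v) :
    ∃ N : (G.deleteEdges {s(u, v)}).Subgraph, N.IsPerfectMatching := by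
  have : Nontrivial V := ⟨u, v, huv.ne⟩
  obtain ⟨w, huw⟩ := (G.deleteEdges {s(u, v)}).mem_support.mp
    ((hG.connected_deleteEdges hE huv).preconnected.support_eq_univ ▸ Set.mem_univ u)
  obtain ⟨huw, hne⟩ := deleteEdges_adj.mp huw
  obtain ⟨M, hM, huwM⟩ := hG.2.2 s(u, w) huw
  refine hM.exists_isPerfectMatching_deleteEdges fun huvM => hne ?_
  obtain rfl : w = v := hM.1.eq_of_adj_left huwM huvM
  rfl

theorem mem_of_ncard_nbhd_deleteEdges_le (hG : MatchingCovered G)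
    (hbip : G.IsBipartiteWith A B) (hv : v ∈ B) {T : Set V} (hTA : T ⊆ A) (hT : T.Nonempty)
    (hTA' : T ≠ A) (hle : ((G.deleteEdges {s(u, v)}).nbhd T).ncard ≤ T.ncard) : u ∈ T := by
  by_contra huT
  have hvT : v ∉ T := fun h => hbip.disjoint.notMem_of_mem_left (hTA h) hv
  exact hTA' (hG.eq_of_ncard_nbhd_le hbip hTA hT
    ((Set.ncard_le_ncard (nbhd_subset_nbhd_deleteEdges huT hvT)).trans hle))

theorem exists_isPerfectMatching_of_isLeast (hG : MatchingCovered G)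
    (hbip : G.IsBipartiteWith A B) (hcov : A ∪ B = Set.univ) (hv : v ∈ B)
    {N : (G.deleteEdges {s(u, v)}).Subgraph} (hN : N.IsPerfectMatching) {S : Set V}
    (hS : IsLeast {T | T ⊆ A ∧ u ∈ T ∧ ((G.deleteEdges {s(u, v)}).nbhd T).ncard ≤ T.ncard} S)
    {x y : V} (hx : x ∈ S) (hxy : (G.deleteEdges {s(u, v)}).Adj x y) :
    ∃ N : (G.deleteEdges {s(u, v)}).Subgraph, N.IsPerfectMatching ∧ s(x, y) ∈ N.edgeSet := by
  by_contra! hno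
  have hbip' := hbip.mono (G.deleteEdges_le {s(u, v)})
  have hxA : x ∈ A := hS.1.1 hx
  obtain ⟨T, hTA, hxT, hT, hle⟩ := exists_ncard_nbhd_le_of_forall_notMem_edgeSet hbip' hcov
    (hN.ncard_eq_of_isBipartiteWith hbip').ge hxA hxy hno
  have huT := hG.mem_of_ncard_nbhd_deleteEdges_le hbip hv hTA hT (fun h => hxT (h ▸ hxA)) hle
  exact hxT (hS.2 ⟨hTA, huT, hle⟩ hx)

theorem matchingCovered_induce_union_nbhd_of_isLeast (hG : MatchingCovered G)
    (hbip : G.IsBipartiteWith A B) (hcov : A ∪ B = Set.univ) (hv : v ∈ B)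
    {N : (G.deleteEdges {s(u, v)}).Subgraph} (hN : N.IsPerfectMatching) {S : Set V}
    (hS : IsLeast {T | T ⊆ A ∧ u ∈ T ∧ ((G.deleteEdges {s(u, v)}).nbhd T).ncard ≤ T.ncard} S)
    (hvS : v ∉ (G.deleteEdges {s(u, v)}).nbhd S) :
    MatchingCovered (G.induce (S ∪ (G.deleteEdges {s(u, v)}).nbhd S)) := by
  obtain ⟨hSA, huS, hSle⟩ := hS.1
  have hbip' := hbip.mono (G.deleteEdges_le {s(u, v)})
  rw [← induce_deleteEdges_of_notMem (u := u) fun h =>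
    h.elim (fun h => hbip.disjoint.notMem_of_mem_left (hSA h) hv) hvS]
  refine ⟨hN.connected_induce_union_nbhd huS hSle fun T hTS huT hT =>
      hS.2 ⟨hTS.trans hSA, huT, hT⟩, ?_,
    hbip'.forall_mem_edgeSet_induce_union_nbhd hSA hSle fun x hx _ hxy =>
      hG.exists_isPerfectMatching_of_isLeast hbip hcov hv hN hS hx hxy⟩
  rw [Nat.card_coe_set_eq]
  have hw : hN.partner u ∈ (G.deleteEdges {s(u, v)}).nbhd S :=
    ⟨u, huS, N.adj_sub (hN.adj_partner u)⟩
  exact (Set.one_lt_ncard_iff).mpr ⟨u, _, Or.inl huS, Or.inr hw,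
    fun h => hbip.disjoint.notMem_of_mem_left (hSA huS) (h ▸ hbip'.nbhd_subset hSA hw)⟩

theorem exists_of_not_matchingCovered_deleteEdges (hG : MatchingCovered G)
    (hbip : G.IsBipartiteWith A B) (hcov : A ∪ B = Set.univ) (hE : 2 ≤ G.edgeSet.ncard)
    (hu : u ∈ A) (hv : v ∈ B) (huv : G.Adj u v)
    (hnot : ¬ MatchingCovered (G.deleteEdges {s(u, v)})) :
    ∃ A₁ B₁ : Set V, A₁.Nonempty ∧ A₁ ⊂ A ∧ B₁.Nonempty ∧ B₁ ⊂ B ∧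
      MatchingCovered (G.induce (A₁ ∪ B₁)) ∧ u ∈ A₁ ∧ v ∈ B \ B₁ ∧
      (∀ a ∈ A₁, ∀ b ∈ B \ B₁, G.Adj a b → a = u ∧ b = v) := by
  set G' := G.deleteEdges {s(u, v)}
  have hbip' : G'.IsBipartiteWith A B := hbip.mono (G.deleteEdges_le _)
  have hvA : v ∉ A := fun h => hbip.disjoint.notMem_of_mem_left h hv
  obtain ⟨N, hN⟩ : ∃ N : G'.Subgraph, N.IsPerfectMatching :=
    hG.exists_isPerfectMatching_deleteEdges hE huv
  obtain ⟨S, hS⟩ := hN.exists_isLeast_ncard_nbhd_le hbip' hu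
  obtain ⟨hSA, huS, hSle⟩ := hS.1
  have hSA' : S ≠ A := by
    refine fun hSA' => hnot ⟨hG.connected_deleteEdges hE huv, hG.2.1, fun e he => ?_⟩
    induction e using Sym2.ind with | _ x y
    rcases hbip'.mem_of_adj he with ⟨hx, -⟩ | ⟨-, hy⟩
    · exact hG.exists_isPerfectMatching_of_isLeast hbip hcov hv hN hS (hSA' ▸ hx) he
    · rw [Sym2.eq_swap]
      exact hG.exists_isPerfectMatching_of_isLeast hbip hcov hv hN hS (hSA' ▸ hy) he.symm
  have hvS : v ∉ G'.nbhd S := fun hvS => hSA' <| hG.eq_of_ncard_nbhd_le hbip hSA ⟨u, huS⟩ <|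
    (Set.ncard_le_ncard (nbhd_subset_insert_nbhd_deleteEdges fun h => hvA (hSA h))).trans
      (by rwa [Set.insert_eq_of_mem hvS])
  refine ⟨S, G'.nbhd S, ⟨u, huS⟩, hSA.ssubset_of_ne hSA',
    ⟨hN.partner u, u, huS, N.adj_sub (hN.adj_partner u)⟩,
    (hbip'.nbhd_subset hSA).ssubset_of_ne fun h => hvS (h ▸ hv),
    hG.matchingCovered_induce_union_nbhd_of_isLeast hbip hcov hv hN hS hvS, huS, ⟨hv, hvS⟩, ?_⟩
  rintro x hx y ⟨-, hyS⟩ hxy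
  have : s(x, y) = s(u, v) := by
    by_contra hne
    exact hyS ⟨x, hx, deleteEdges_adj.mpr ⟨hxy, hne⟩⟩
  rcases Sym2.eq_iff.mp this with h | ⟨rfl, -⟩
  exacts [h, absurd (hSA hx) hvA]

theorem not_matchingCovered_deleteEdges_of_forall_adj {A₁ B₁ : Set V}
    (hbip : G.IsBipartiteWith A B) (hA₁ : A₁.Nonempty) (hA₁A : A₁ ⊂ A) (hB₁B : B₁ ⊆ B)
    (hX : MatchingCovered (G.induce (A₁ ∪ B₁)))
    (hcut : ∀ a ∈ A₁, ∀ b ∈ B \ B₁, G.Adj a b → a = u ∧ b = v) :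
    ¬ MatchingCovered (G.deleteEdges {s(u, v)}) := by
  intro hG'
  have hcard : A₁.ncard = B₁.ncard := by
    have := hX.ncard_inter_eq_of_isBipartiteWith hbip
    rwa [Set.inter_union_distrib_left, Set.inter_union_distrib_left,
      Set.inter_eq_right.mpr hA₁A.subset, (hbip.disjoint.mono_right hB₁B).inter_eq,
      (hbip.disjoint.symm.mono_right hA₁A.subset).inter_eq, Set.inter_eq_right.mpr hB₁B,
      Set.union_empty, Set.empty_union] at this
  have hnbhd : (G.deleteEdges {s(u, v)}).nbhd A₁ ⊆ B₁ := by
    rintro y ⟨x, hx, hxy⟩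
    obtain ⟨hxy, hne⟩ := deleteEdges_adj.mp hxy
    by_contra hy
    obtain ⟨rfl, rfl⟩ := hcut x hx y ⟨hbip.mem_of_mem_adj (hA₁A.subset hx) hxy, hy⟩ hxy
    exact hne rfl
  exact hA₁A.ne (hG'.eq_of_ncard_nbhd_le (hbip.mono (G.deleteEdges_le _)) hA₁A.subset hA₁
    ((Set.ncard_le_ncard hnbhd).trans hcard.ge))

end MatchingCovered

theorem stmt10 {V : Type u} [Finite V] (G : SimpleGraph V) (A B : Set V)
    (hG : MatchingCovered G) (hbip : IsBipartition G A B)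
    (hE : 2 ≤ G.edgeSet.ncard)
    (u v : V) (hu : u ∈ A) (hv : v ∈ B) (huv : G.Adj u v) :
    ¬ Removable G s(u, v) ↔
      ∃ A₁ B₁ : Set V, A₁.Nonempty ∧ A₁ ⊂ A ∧ B₁.Nonempty ∧ B₁ ⊂ B ∧
        MatchingCovered (G.induce (A₁ ∪ B₁)) ∧
        u ∈ A₁ ∧ v ∈ B \ B₁ ∧
        (∀ a ∈ A₁, ∀ b ∈ B \ B₁, G.Adj a b → a = u ∧ b = v) := by
  obtain ⟨hcov, hdisj, hadj⟩ := hbip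
  have hbip : G.IsBipartiteWith A B := ⟨Set.disjoint_iff_inter_eq_empty.mpr hdisj, hadj⟩
  refine ⟨fun hnot => hG.exists_of_not_matchingCovered_deleteEdges hbip hcov hE hu hv huv
    fun h => hnot ⟨huv, h⟩, ?_⟩
  rintro ⟨A₁, B₁, hA₁, hA₁A, -, hB₁B, hX, -, -, hcut⟩ ⟨-, hG'⟩
  exact hX.not_matchingCovered_deleteEdges_of_forall_adj hbip hA₁ hA₁A hB₁B.subset hcut hG'
end

section
/- Let G be a matching covered bipartite graph with bipartition (A, B), at least 4 vertices, and minimum degree at least 3. If X is a minimum P-set of G, then every edge of the induced subgraph G[X] is removable in G. -/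
open SimpleGraph

universe u

/-!
A perfect matching is an involution `σ` along edges. For any vertex set `Z`, `|Z ∩ A| - |Z ∩ B|`
equals the difference between the numbers of vertices of `Z ∩ A` and of `Z ∩ B` that `σ` matches
out of `Z`. Hence a set entered (towards `B`) only by the edge `a₀b₀`
satisfies `|Z ∩ B| ≤ |Z ∩ A|` (take `σ` matching `a₀` elsewhere, possible as `deg a₀ ≥ 2`), and a
balanced set entered by no edge is `∅` or everything.

Let `uv` be an edge inside the minimum P-set `X`, which (after exchanging `A` and `B` if
necessary) is entered only by `x₀y₀`. If an edge `xy`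
of `G - uv` lies in no perfect matching of `G - uv`, Hall's theorem for `G - uv - x - y` yields a
balanced set `W` with `v ∈ W`, `u ∉ W`, entered only by `uv`. Uncrossing, i.e. applying the
inequalities above to `X ∩ W`, `X ∪ W` and `insert u (X ∩ W)` together with
`|(X ∪ W) ∩ S| + |X ∩ W ∩ S| = |X ∩ S| + |W ∩ S|`, produces a P-set smaller than `X` or a vertex of
degree at most two.
-/

namespace IsBipartition

variable {V : Type u} {G : SimpleGraph V} {A B : Set V}

lemma notMem_right (hbip : IsBipartition G A B) {a : V} (ha : a ∈ A) : a ∉ B :=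
  fun hb => (hbip.2.1 ▸ ⟨ha, hb⟩ : a ∈ (∅ : Set V))

lemma mem_or_mem (hbip : IsBipartition G A B) (a : V) : a ∈ A ∨ a ∈ B := by
  have h : a ∈ A ∪ B := hbip.1 ▸ Set.mem_univ a
  exact h

lemma symm (hbip : IsBipartition G A B) : IsBipartition G B A :=
  ⟨Set.union_comm A B ▸ hbip.1, Set.inter_comm A B ▸ hbip.2.1,
    fun a b hab => (hbip.2.2 a b hab).symm⟩

lemma mem_left_of_adj (hbip : IsBipartition G A B) {a b : V} (hab : G.Adj a b) (hb : b ∈ B) :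
    a ∈ A :=
  (hbip.2.2 a b hab).elim And.left fun h => absurd hb (hbip.notMem_right h.2)

lemma mem_right_of_adj (hbip : IsBipartition G A B) {a b : V} (hab : G.Adj a b) (ha : a ∈ A) :
    b ∈ B :=
  hbip.symm.mem_left_of_adj hab.symm ha

lemma mono {H : SimpleGraph V} (hbip : IsBipartition G A B) (hHG : H ≤ G) : IsBipartition H A B :=
  ⟨hbip.1, hbip.2.1, fun a b hab => hbip.2.2 a b (hHG hab)⟩

lemma union_inter_of_subset (hbip : IsBipartition G A B) {S T : Set V}
    (hS : S ⊆ A) (hT : T ⊆ B) : (S ∪ T) ∩ B = T :=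
  Set.ext fun _ => ⟨fun ⟨hb, hbB⟩ => hb.resolve_left fun hbS => hbip.notMem_right (hS hbS) hbB,
    fun hb => ⟨.inr hb, hT hb⟩⟩

lemma adj_deleteEdges_or (hbip : IsBipartition G A B) {u v a b : V} (hu : u ∈ A)
    (hb : b ∈ B) (hab : G.Adj b a) : (G.deleteEdges {s(u, v)}).Adj b a ∨ a = u ∧ b = v := by
  by_contra! h
  refine h.1 (deleteEdges_adj.mpr ⟨hab, fun hbu => ?_⟩)
  rw [Set.mem_singleton_iff, Sym2.eq_iff] at hbu
  rcases hbu with ⟨rfl, -⟩ | ⟨rfl, rfl⟩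
  exacts [hbip.notMem_right hu hb, h.2 rfl rfl]

lemma ncard_sdiff_pair_inter_eq (hbip : IsBipartition G A B) {X : Set V}
    (hbal : (X ∩ A).ncard = (X ∩ B).ncard) {u v : V} (hu : u ∈ X) (hv : v ∈ X) (huA : u ∈ A)
    (hvB : v ∈ B) : ((X \ {u, v}) ∩ A).ncard = ((X \ {u, v}) ∩ B).ncard := by
  have hvA : v ∉ A := hbip.symm.notMem_right hvB
  have huB : u ∉ B := hbip.notMem_right huA
  have hXA : (X \ {u, v}) ∩ A = (X ∩ A) \ {u} := by
    ext a
    simp only [Set.mem_inter_iff, Set.mem_sdiff, Set.mem_insert_iff, Set.mem_singleton_iff]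
    grind
  have hXB : (X \ {u, v}) ∩ B = (X ∩ B) \ {v} := by
    ext b
    simp only [Set.mem_inter_iff, Set.mem_sdiff, Set.mem_insert_iff, Set.mem_singleton_iff]
    grind
  rw [hXA, hXB, Set.ncard_sdiff_singleton_of_mem (show u ∈ X ∩ A from ⟨hu, huA⟩),
    Set.ncard_sdiff_singleton_of_mem (show v ∈ X ∩ B from ⟨hv, hvB⟩), hbal]

end IsBipartition

lemma existsUnique_adj_swap {V : Type u} {G : SimpleGraph V} {S T : Set V}
    (h : ∃! p : V × V, p.1 ∈ S ∧ p.2 ∈ T ∧ G.Adj p.1 p.2) :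
    ∃! p : V × V, p.1 ∈ T ∧ p.2 ∈ S ∧ G.Adj p.1 p.2 := by
  obtain ⟨⟨a, b⟩, hab, huniq⟩ := h
  refine ⟨(b, a), ⟨hab.2.1, hab.1, hab.2.2.symm⟩, fun ⟨c, d⟩ hcd => ?_⟩
  simpa [and_comm] using huniq (d, c) ⟨hcd.2.1, hcd.1, hcd.2.2.symm⟩

lemma IsPSet.symm {V : Type u} {G : SimpleGraph V} {A B X : Set V} (hX : IsPSet G A B X) :
    IsPSet G B A X :=
  ⟨hX.1.symm, hX.2.symm.imp existsUnique_adj_swap existsUnique_adj_swap⟩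

/-- A perfect matching, recorded by the map sending each vertex to its partner. -/
def IsPMInvolution {V : Type u} (G : SimpleGraph V) (σ : V → V) : Prop :=
  ∀ z, G.Adj z (σ z) ∧ σ (σ z) = z

namespace IsPMInvolution

variable {V : Type u} {G : SimpleGraph V} {σ : V → V}

lemma adj (hσ : IsPMInvolution G σ) (z : V) : G.Adj z (σ z) := (hσ z).1

lemma apply_apply (hσ : IsPMInvolution G σ) (z : V) : σ (σ z) = z := (hσ z).2

lemma injective (hσ : IsPMInvolution G σ) : Function.Injective σ :=
  Function.LeftInverse.injective hσ.apply_apply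

lemma eq_iff_eq (hσ : IsPMInvolution G σ) {a b : V} : σ a = b ↔ σ b = a :=
  ⟨fun h => h ▸ hσ.apply_apply a, fun h => h ▸ hσ.apply_apply b⟩

def toSubgraph (hσ : IsPMInvolution G σ) : G.Subgraph where
  verts := Set.univ
  Adj z w := σ z = w
  adj_sub h := h ▸ hσ.adj _
  edge_vert _ := Set.mem_univ _
  symm := ⟨fun _ _ h => hσ.eq_iff_eq.mp h⟩

lemma isPerfectMatching_toSubgraph (hσ : IsPMInvolution G σ) :
    hσ.toSubgraph.IsPerfectMatching :=
  Subgraph.isPerfectMatching_iff.mpr fun z => ⟨σ z, rfl, fun _ h => Eq.symm h⟩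

lemma deleteEdges_iff {u v : V} :
    IsPMInvolution (G.deleteEdges {s(u, v)}) σ ↔ IsPMInvolution G σ ∧ σ u ≠ v := by
  simp only [IsPMInvolution, deleteEdges_adj, Set.mem_singleton_iff, Sym2.eq_iff]
  refine ⟨fun h => ⟨fun z => ⟨(h z).1.1, (h z).2⟩, fun huv => (h u).1.2 (.inl ⟨rfl, huv⟩)⟩,
    fun ⟨h, huv⟩ z => ⟨⟨(h z).1, ?_⟩, (h z).2⟩⟩
  rintro (⟨rfl, hv⟩ | ⟨rfl, hu⟩)
  · exact huv hv
  · exact huv (hu ▸ (h z).2)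

end IsPMInvolution

lemma SimpleGraph.Subgraph.IsPerfectMatching.exists_isPMInvolution {V : Type u}
    {G : SimpleGraph V} {M : G.Subgraph} (hM : M.IsPerfectMatching) :
    ∃ σ, IsPMInvolution G σ ∧ ∀ z w, M.Adj z w ↔ σ z = w := by
  choose σ hσ huniq using Subgraph.isPerfectMatching_iff.mp hM
  have hσσ : ∀ z, σ (σ z) = z := fun z => (huniq _ _ (hσ z).symm).symm
  exact ⟨σ, fun z => ⟨M.adj_sub (hσ z), hσσ z⟩,
    fun z w => ⟨fun h => (huniq z w h).symm, fun h => h ▸ hσ z⟩⟩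

namespace MatchingCovered

variable {V : Type u} {G : SimpleGraph V}

lemma exists_isPMInvolution (hG : MatchingCovered G) {x y : V} (hxy : G.Adj x y) :
    ∃ σ, IsPMInvolution G σ ∧ σ x = y := by
  obtain ⟨M, hM, hxyM⟩ := hG.2.2 s(x, y) hxy
  obtain ⟨σ, hσ, hMσ⟩ := hM.exists_isPMInvolution
  exact ⟨σ, hσ, (hMσ x y).mp hxyM⟩

lemma exists_isPMInvolution_ne (hG : MatchingCovered G) {a : V} (ha : 2 ≤ degN G a) (b : V) :
    ∃ σ, IsPMInvolution G σ ∧ σ a ≠ b := by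
  have hnot : ¬ G.neighborSet a ⊆ {b} := fun h => by
    have := Set.ncard_le_ncard h
    rw [degN, Nat.card_coe_set_eq] at ha
    rw [Set.ncard_singleton] at this
    omega
  obtain ⟨c, hac, hcb⟩ := Set.not_subset.mp hnot
  obtain ⟨σ, hσ, hσa⟩ := hG.exists_isPMInvolution hac
  exact ⟨σ, hσ, hσa ▸ hcb⟩

end MatchingCovered

lemma IsBipartition.matchingCovered_of_forall_adj {V : Type u} {G : SimpleGraph V} {A B : Set V}
    (hbip : IsBipartition G A B) (hconn : G.Connected) (hcard : 2 ≤ Nat.card V)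
    (h : ∀ x y, x ∈ A → G.Adj x y → ∃ σ, IsPMInvolution G σ ∧ σ x = y) :
    MatchingCovered G := by
  refine ⟨hconn, hcard, fun e he => ?_⟩
  induction e using Sym2.ind with | _ x y => ?_
  obtain ⟨σ, hσ, hσx⟩ : ∃ σ, IsPMInvolution G σ ∧ σ x = y := by
    rcases hbip.mem_or_mem x with hx | hx
    · exact h x y hx he
    · obtain ⟨σ, hσ, hσy⟩ := h y x (hbip.mem_left_of_adj (G.adj_symm he) hx) (G.adj_symm he)
      exact ⟨σ, hσ, hσ.eq_iff_eq.mp hσy⟩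
  exact ⟨hσ.toSubgraph, hσ.isPerfectMatching_toSubgraph, hσx⟩

lemma SimpleGraph.Reachable.mem_of_forall_adj {V : Type u} {G : SimpleGraph V} {Z : Set V}
    (hZ : ∀ z w, G.Adj z w → z ∈ Z → w ∈ Z) {z w : V} (hzw : G.Reachable z w) (hz : z ∈ Z) :
    w ∈ Z := by
  rw [reachable_iff_reflTransGen] at hzw
  induction hzw with
  | refl => exact hz
  | tail _ hab ih => exact hZ _ _ hab ih

section Counting

variable {V : Type u} [Finite V] {G : SimpleGraph V} {A B : Set V} {σ : V → V}

/-- The vertices of `Z ∩ A` matched inside `Z` are matched to those of `Z ∩ B`. -/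
lemma IsPMInvolution.ncard_inter_add_ncard_sdiff (hσ : IsPMInvolution G σ)
    (hbip : IsBipartition G A B) (Z : Set V) :
    (Z ∩ A).ncard + ((Z ∩ B) \ σ ⁻¹' Z).ncard = (Z ∩ B).ncard + ((Z ∩ A) \ σ ⁻¹' Z).ncard := by
  have himage : σ '' (Z ∩ A ∩ σ ⁻¹' Z) = Z ∩ B ∩ σ ⁻¹' Z := by
    ext b
    constructor
    · rintro ⟨a, ⟨⟨haZ, haA⟩, hσa⟩, rfl⟩
      exact ⟨⟨hσa, hbip.mem_right_of_adj (hσ.adj a) haA⟩, by simpa [hσ.apply_apply] using haZ⟩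
    · rintro ⟨⟨hbZ, hbB⟩, hσb⟩
      refine ⟨σ b, ⟨⟨hσb, hbip.mem_left_of_adj (hσ.adj b).symm hbB⟩, ?_⟩, hσ.apply_apply b⟩
      simpa [Set.mem_preimage, hσ.apply_apply] using hbZ
  have hA := Set.ncard_inter_add_ncard_sdiff_eq_ncard (Z ∩ A) (σ ⁻¹' Z)
  have hB := Set.ncard_inter_add_ncard_sdiff_eq_ncard (Z ∩ B) (σ ⁻¹' Z)
  rw [← himage, Set.ncard_image_of_injective _ hσ.injective] at hB
  omega

lemma IsBipartition.ncard_eq (hbip : IsBipartition G A B) (hσ : IsPMInvolution G σ) :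
    A.ncard = B.ncard := by
  simpa using hσ.ncard_inter_add_ncard_sdiff hbip Set.univ

end Counting

section Entering

variable {V : Type u} {G : SimpleGraph V} {A B X W : Set V} {x₀ y₀ u v : V}

def IsEntering (G : SimpleGraph V) (B Z : Set V) (a b : V) : Prop :=
  G.Adj a b ∧ a ∉ Z ∧ b ∈ Z ∧ b ∈ B

def EnteredOnlyBy (G : SimpleGraph V) (B Z : Set V) (a₀ b₀ : V) : Prop :=
  ∀ a b, IsEntering G B Z a b → a = a₀ ∧ b = b₀

lemma existsUnique_iff_enteredOnlyBy (hbip : IsBipartition G A B) (Z : Set V) :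
    (∃! p : V × V, p.1 ∈ A \ Z ∧ p.2 ∈ Z ∩ B ∧ G.Adj p.1 p.2) ↔
      ∃ a₀ b₀, IsEntering G B Z a₀ b₀ ∧ EnteredOnlyBy G B Z a₀ b₀ := by
  constructor
  · rintro ⟨⟨a₀, b₀⟩, ⟨⟨_, ha₀⟩, ⟨hb₀, hb₀B⟩, hab₀⟩, huniq⟩
    refine ⟨a₀, b₀, ⟨hab₀, ha₀, hb₀, hb₀B⟩, fun a b ⟨hab, ha, hb, hbB⟩ => ?_⟩
    simpa using huniq (a, b) ⟨⟨hbip.mem_left_of_adj hab hbB, ha⟩, ⟨hb, hbB⟩, hab⟩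
  · rintro ⟨a₀, b₀, ⟨hab₀, ha₀, hb₀, hb₀B⟩, hZ⟩
    refine ⟨(a₀, b₀), ⟨⟨hbip.mem_left_of_adj hab₀ hb₀B, ha₀⟩, ⟨hb₀, hb₀B⟩, hab₀⟩, ?_⟩
    rintro ⟨a, b⟩ ⟨⟨_, ha⟩, ⟨hb, hbB⟩, hab⟩
    simpa using hZ a b ⟨hab, ha, hb, hbB⟩

lemma IsPSet.exists_enteredOnlyBy (hbip : IsBipartition G A B) {X : Set V}
    (hX : IsPSet G A B X) :
    (∃ a₀ b₀, IsEntering G A X a₀ b₀ ∧ EnteredOnlyBy G A X a₀ b₀) ∨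
      ∃ a₀ b₀, IsEntering G B X a₀ b₀ ∧ EnteredOnlyBy G B X a₀ b₀ :=
  hX.2.imp (fun h => (existsUnique_iff_enteredOnlyBy hbip.symm X).mp (existsUnique_adj_swap h))
    (existsUnique_iff_enteredOnlyBy hbip X).mp

lemma isPSet_of_enteredOnlyBy (hbip : IsBipartition G A B) {Z : Set V}
    (hbal : (Z ∩ A).ncard = (Z ∩ B).ncard) {a₀ b₀ : V} (h₀ : IsEntering G B Z a₀ b₀)
    (hZ : EnteredOnlyBy G B Z a₀ b₀) : IsPSet G A B Z :=
  ⟨hbal, .inr <| (existsUnique_iff_enteredOnlyBy hbip Z).mpr ⟨a₀, b₀, h₀, hZ⟩⟩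

lemma isPSet_compl_of_enteredOnlyBy [Finite V] (hbip : IsBipartition G A B)
    (hcard : A.ncard = B.ncard) {Z : Set V} (hbal : (Z ∩ A).ncard = (Z ∩ B).ncard)
    {a₀ b₀ : V} (h₀ : IsEntering G B Z a₀ b₀) (hZ : EnteredOnlyBy G B Z a₀ b₀) :
    IsPSet G A B Zᶜ := by
  have hcompl (S : Set V) : Zᶜ ∩ S = S \ Z := by rw [Set.inter_comm, Set.sdiff_eq]
  refine ⟨?_, .inl ?_⟩
  · have hA := Set.ncard_inter_add_ncard_sdiff_eq_ncard A Z
    have hB := Set.ncard_inter_add_ncard_sdiff_eq_ncard B Z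
    rw [Set.inter_comm Z A, Set.inter_comm Z B] at hbal
    rw [hcompl, hcompl]
    omega
  · rw [hcompl, Set.sdiff_compl, Set.inter_comm]
    exact (existsUnique_iff_enteredOnlyBy hbip Z).mpr ⟨a₀, b₀, h₀, hZ⟩

lemma EnteredOnlyBy.union (hX : EnteredOnlyBy G B X x₀ y₀)
    (hW : EnteredOnlyBy G B W u v) (hu : u ∈ X) : EnteredOnlyBy G B (X ∪ W) x₀ y₀ := by
  rintro a b ⟨hab, ha, hb | hb, hbB⟩
  · exact hX a b ⟨hab, fun h => ha (.inl h), hb, hbB⟩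
  · exact absurd (.inl ((hW a b ⟨hab, fun h => ha (.inr h), hb, hbB⟩).1 ▸ hu)) ha


lemma EnteredOnlyBy.insert_inter (hX : EnteredOnlyBy G B X x₀ y₀) (hbip : IsBipartition G A B)
    (hW : EnteredOnlyBy G B W u v) (hu : u ∈ A) :
    EnteredOnlyBy G B (insert u (X ∩ W)) x₀ y₀ := by
  rintro a b ⟨hab, ha, hb, hbB⟩
  have hbXW : b ∈ X ∩ W := hb.resolve_left fun h => hbip.notMem_right hu (h ▸ hbB)
  by_cases haX : a ∈ X
  · exact absurd (hW a b ⟨hab, fun h => ha (.inr ⟨haX, h⟩), hbXW.2, hbB⟩).1 fun h => ha (.inl h)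
  · exact hX a b ⟨hab, haX, hbXW.1, hbB⟩

lemma enteredOnlyBy_union_neighbors (hbip : IsBipartition G A B) {u v : V} (hu : u ∈ A)
    {T : Set V} (hT : T ⊆ B) :
    EnteredOnlyBy G B (T ∪ {a | ∃ b ∈ T, (G.deleteEdges {s(u, v)}).Adj b a}) u v := by
  rintro a b ⟨hab, ha, hb, hbB⟩
  refine (hbip.adj_deleteEdges_or hu hbB hab.symm).resolve_left fun hba => ha (.inr ⟨b, ?_, hba⟩)
  exact hb.resolve_right fun ⟨c, hc, hcb⟩ =>
    hbip.notMem_right (hbip.mem_left_of_adj hcb.1.symm (hT hc)) hbB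

end Entering

section Cuts

variable {V : Type u} [Finite V] {G : SimpleGraph V} {A B Z : Set V}

lemma IsPMInvolution.ncard_inter_eq_of_not_isEntering {σ : V → V} (hσ : IsPMInvolution G σ)
    (hbip : IsBipartition G A B) (hZ : ∀ b ∈ Z ∩ B, ¬ IsEntering G B Z (σ b) b) :
    (Z ∩ A).ncard = (Z ∩ B).ncard + ((Z ∩ A) \ σ ⁻¹' Z).ncard := by
  have hB : (Z ∩ B) \ σ ⁻¹' Z = ∅ := Set.eq_empty_of_forall_notMem
    fun b ⟨hb, hσb⟩ => hZ b hb ⟨(hσ.adj b).symm, hσb, hb⟩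
  simpa [hB] using hσ.ncard_inter_add_ncard_sdiff hbip Z

lemma EnteredOnlyBy.ncard_inter_le {a₀ b₀ : V} (hZ : EnteredOnlyBy G B Z a₀ b₀)
    (hG : MatchingCovered G) (hbip : IsBipartition G A B) (ha₀ : 2 ≤ degN G a₀) :
    (Z ∩ B).ncard ≤ (Z ∩ A).ncard := by
  obtain ⟨σ, hσ, hσa₀⟩ := hG.exists_isPMInvolution_ne ha₀ b₀
  refine (hσ.ncard_inter_eq_of_not_isEntering hbip fun b _ hb => hσa₀ ?_).symm ▸ le_self_add
  obtain ⟨rfl, rfl⟩ := hZ _ _ hb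
  exact hσ.apply_apply b

/-- A perfect matching through an edge leaving `Z ∩ A` would match more vertices of `Z ∩ A` out of
`Z` than of `Z ∩ B`, so `Z` is closed under adjacency. -/
lemma eq_empty_or_univ_of_forall_not_isEntering (hG : MatchingCovered G)
    (hbip : IsBipartition G A B) (hbal : (Z ∩ A).ncard = (Z ∩ B).ncard)
    (hZ : ∀ a b, ¬ IsEntering G B Z a b) : Z = ∅ ∨ Z = Set.univ := by
  have hclosed : ∀ z w, G.Adj z w → z ∈ Z → w ∈ Z := by
    intro z w hzw hz
    by_contra hw
    rcases hbip.mem_or_mem z with hzA | hzB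
    · obtain ⟨σ, hσ, rfl⟩ := hG.exists_isPMInvolution hzw
      have hcount := hσ.ncard_inter_eq_of_not_isEntering hbip fun b _ => hZ (σ b) b
      have hout : ((Z ∩ A) \ σ ⁻¹' Z).Nonempty := ⟨z, ⟨hz, hzA⟩, hw⟩
      rw [← Set.ncard_pos] at hout
      omega
    · exact hZ w z ⟨hzw.symm, hw, hz, hzB⟩
  exact Z.eq_empty_or_nonempty.imp id fun ⟨z, hz⟩ => Set.eq_univ_of_forall fun w =>
    (hG.1.preconnected z w).mem_of_forall_adj hclosed hz

/-- If `uv` were a bridge, the component `R` of `v` in `G - uv` would be entered only by `uv`, so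
`|R ∩ B| ≤ |R ∩ A|`; but a perfect matching through `uv` matches `R ∩ A` into `R ∩ B - v`. -/
lemma MatchingCovered.connected_deleteEdges_s11 (hG : MatchingCovered G)
    (hbip : IsBipartition G A B) {u v : V} (hu : u ∈ A) (huv : G.Adj u v)
    (hdeg : 2 ≤ degN G u) : (G.deleteEdges {s(u, v)}).Connected := by
  refine hG.1.connected_delete_edge_of_not_isBridge fun hbridge => ?_
  set R : Set V := {z | (G.deleteEdges {s(u, v)}).Reachable v z}
  have hvR : v ∈ R := Reachable.refl v
  have huR : u ∉ R := fun h => isBridge_iff.mp hbridge h.symm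
  have hleave : ∀ z w, G.Adj z w → z ∈ R → w ∉ R → z = v ∧ w = u := by
    intro z w hzw hz hw
    by_contra hne
    refine hw (hz.trans (Adj.reachable ?_))
    rw [deleteEdges_adj, Set.mem_singleton_iff, Sym2.eq_iff]
    exact ⟨hzw, by rintro (⟨rfl, -⟩ | ⟨rfl, rfl⟩); exacts [huR hz, hne ⟨rfl, rfl⟩]⟩
  have hR : EnteredOnlyBy G B R u v := fun a b ⟨hab, ha, hb, _⟩ =>
    (hleave b a hab.symm hb ha).symm
  obtain ⟨σ, hσ, hσu⟩ := hG.exists_isPMInvolution huv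
  have hvout : ((R ∩ B) \ σ ⁻¹' R).Nonempty :=
    ⟨v, ⟨hvR, hbip.mem_right_of_adj huv hu⟩, by simpa [hσ.eq_iff_eq.mp hσu] using huR⟩
  have hAout : (R ∩ A) \ σ ⁻¹' R = ∅ := Set.eq_empty_of_forall_notMem fun a ⟨⟨ha, haA⟩, hσa⟩ =>
    hbip.notMem_right haA ((hleave a (σ a) (hσ.adj a) ha hσa).1 ▸ hbip.mem_right_of_adj huv hu)
  have hcount := hσ.ncard_inter_add_ncard_sdiff hbip R
  rw [hAout, Set.ncard_empty, add_zero] at hcount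
  rw [← Set.ncard_pos] at hvout
  have := hR.ncard_inter_le hG hbip hdeg
  omega

end Cuts

lemma Set.exists_injOn_of_forall_ncard_le {α β : Type*} [Finite α] [Finite β] [Nonempty β]
    {S : Set α} (r : α → β → Prop) (h : ∀ T ⊆ S, T.ncard ≤ {b | ∃ a ∈ T, r a b}.ncard) :
    ∃ f : α → β, Set.InjOn f S ∧ ∀ a ∈ S, r a (f a) := by
  classical
  have := Fintype.ofFinite β
  obtain ⟨f, hf, hr⟩ :=
    (Fintype.all_card_le_filter_rel_iff_exists_injective fun (a : S) b => r a b).mp fun T => by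
      have hT := h (Subtype.val '' (T : Set S)) (by simp [Set.image_subset_iff])
      rw [Subtype.val_injective.injOn.ncard_image, Set.ncard_coe_finset] at hT
      convert hT using 1
      rw [← Set.ncard_coe_finset]
      congr 1
      ext b
      simp
  refine ⟨fun a => if ha : a ∈ S then f ⟨a, ha⟩ else Classical.arbitrary β, ?_, ?_⟩
  · intro a ha b hb hab
    simp only [ha, hb, dite_true] at hab
    exact congrArg Subtype.val (hf hab)
  · intro a ha
    simpa [ha] using hr ⟨a, ha⟩

lemma IsBipartition.exists_isPMInvolution_of_injOn {V : Type u} [Finite V] {G : SimpleGraph V}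
    {A B : Set V} (hbip : IsBipartition G A B) (hcard : A.ncard = B.ncard) {g : V → V}
    (hinj : Set.InjOn g B) (hmaps : Set.MapsTo g B A) (hadj : ∀ b ∈ B, G.Adj b (g b)) :
    ∃ σ, IsPMInvolution G σ ∧ ∀ b ∈ B, σ b = g b := by
  classical
  have hsurj : Set.SurjOn g B A := (Set.eq_of_subset_of_ncard_le hmaps.image_subset
    (by rw [hinj.ncard_image, hcard])).symm.subset
  choose g' hg'B hgg' using fun a (ha : a ∈ A) => hsurj ha
  have hσB (b : V) (hb : b ∈ B) : (if ha : b ∈ A then g' b ha else g b) = g b :=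
    dif_neg (hbip.symm.notMem_right hb)
  refine ⟨fun z => if hz : z ∈ A then g' z hz else g z, fun z => ?_, hσB⟩
  rcases hbip.mem_or_mem z with hz | hz
  · simp only [dif_pos hz, hσB _ (hg'B z hz)]
    exact ⟨by simpa [hgg'] using (hadj _ (hg'B z hz)).symm, hgg' z hz⟩
  · have hgz := hmaps hz
    simp only [hσB z hz, dif_pos hgz]
    exact ⟨hadj z hz, hinj (hg'B _ hgz) hz (hgg' _ hgz)⟩

section Hall

variable {V : Type u} [Finite V] {G : SimpleGraph V} {A B : Set V}

/-- Hall's theorem for `G - x - y`. -/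
lemma IsBipartition.exists_hall_violator (hbip : IsBipartition G A B)
    (hcard : A.ncard = B.ncard) {x y : V} (hx : x ∈ A) (hxy : G.Adj x y)
    (hno : ∀ σ, IsPMInvolution G σ → σ x ≠ y) :
    ∃ T ⊆ B \ {y}, ({a | ∃ b ∈ T, G.Adj b a} \ {x}).ncard < T.ncard := by
  classical
  have : Nonempty V := ⟨x⟩
  by_contra! hall
  obtain ⟨g, hinj, hg⟩ := Set.exists_injOn_of_forall_ncard_le (fun b a => G.Adj b a ∧ a ≠ x)
    fun T hT => (hall T hT).trans_eq <| congrArg Set.ncard <| Set.ext fun _ =>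
      ⟨fun ⟨⟨b, hb, hba⟩, hax⟩ => ⟨b, hb, hba, hax⟩, fun ⟨b, hb, hba, hax⟩ => ⟨⟨b, hb, hba⟩, hax⟩⟩
  have hgB {b : V} (hb : b ∈ B) (hby : b ≠ y) : G.Adj b (g b) ∧ g b ≠ x := hg b ⟨hb, hby⟩
  let g' : V → V := fun b => if b = y then x else g b
  have hinj' : Set.InjOn g' B := by
    intro b hb b' hb' hbb'
    by_cases hby : b = y <;> by_cases hb'y : b' = y <;> simp only [g', hby, hb'y, if_true,
      if_false] at hbb'
    · exact hby.trans hb'y.symm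
    · exact absurd hbb'.symm (hgB hb' hb'y).2
    · exact absurd hbb' (hgB hb hby).2
    · exact hinj ⟨hb, hby⟩ ⟨hb', hb'y⟩ hbb'
  have hadj' (b : V) (hb : b ∈ B) : G.Adj b (g' b) := by
    by_cases hby : b = y
    · simpa [g', hby] using hxy.symm
    · simpa [g', hby] using (hgB hb hby).1
  obtain ⟨σ, hσ, hσg⟩ := hbip.exists_isPMInvolution_of_injOn hcard hinj'
    (fun b hb => hbip.mem_left_of_adj (hadj' b hb).symm hb) hadj'
  exact hno σ hσ (hσ.eq_iff_eq.mp (by simpa [g'] using hσg y (hbip.mem_right_of_adj hxy hx)))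

/-- `W` is a Hall violator `T` for `G - uv - x - y` together with its neighbourhood in `G - uv`:
a perfect matching of `G` through `xy`, which must use `uv`, shows `v ∈ T`, and one avoiding `uv`
shows that `T` and its neighbourhood are equinumerous. -/
lemma exists_enteredOnlyBy_of_forall_isPMInvolution (hG : MatchingCovered G)
    (hbip : IsBipartition G A B) {u v x y : V} (hu : u ∈ A) (huv : G.Adj u v)
    (hdeg : 2 ≤ degN G u) (hx : x ∈ A) (hxy : (G.deleteEdges {s(u, v)}).Adj x y)
    (hno : ∀ σ, IsPMInvolution (G.deleteEdges {s(u, v)}) σ → σ x ≠ y) :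
    ∃ W : Set V, (W ∩ A).ncard = (W ∩ B).ncard ∧ v ∈ W ∧ u ∉ W ∧ EnteredOnlyBy G B W u v := by
  set H := G.deleteEdges {s(u, v)}
  have hv := hbip.mem_right_of_adj huv hu
  have hy := hbip.mem_right_of_adj hxy.1 hx
  obtain ⟨σ₀, hσ₀, hσ₀x⟩ := hG.exists_isPMInvolution hxy.1
  have hσ₀u : σ₀ u = v := by
    by_contra h
    exact hno σ₀ (IsPMInvolution.deleteEdges_iff.mpr ⟨hσ₀, h⟩) hσ₀x
  obtain ⟨T, hT, hlt⟩ := (hbip.mono (deleteEdges_le _)).exists_hall_violator (hbip.ncard_eq hσ₀)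
    hx hxy hno
  set N : Set V := {a | ∃ b ∈ T, H.Adj b a}
  have hNA : N ⊆ A := by
    rintro a ⟨b, hb, hba⟩
    exact hbip.mem_left_of_adj hba.1.symm (hT hb).1
  have hTN : T.ncard ≤ N.ncard := by
    obtain ⟨σ, hσ, hσu⟩ := hG.exists_isPMInvolution_ne hdeg v
    have hσH := IsPMInvolution.deleteEdges_iff.mpr ⟨hσ, hσu⟩
    exact Set.ncard_le_ncard_of_injOn σ (fun b hb => ⟨b, hb, hσH.adj b⟩) hσ.injective.injOn
  have hvT : v ∈ T := by
    by_contra hvT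
    refine hlt.not_ge (Set.ncard_le_ncard_of_injOn σ₀ (fun b hb => ⟨?_, ?_⟩) hσ₀.injective.injOn)
    · exact ⟨b, hb, (hbip.adj_deleteEdges_or hu (hT hb).1 (hσ₀.adj b)).resolve_right
        fun h => hvT (h.2 ▸ hb)⟩
    · exact fun hσ₀b => (hT hb).2 (hσ₀.eq_iff_eq.mp hσ₀b ▸ hσ₀x)
  have hxN : x ∈ N := by
    by_contra hxN
    rw [Set.sdiff_singleton_eq_self hxN] at hlt
    omega
  rw [Set.ncard_sdiff_singleton_of_mem hxN] at hlt
  have hTB : T ⊆ B := fun b hb => (hT hb).1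
  have hWA : (T ∪ N) ∩ A = N := hbip.symm.union_inter_of_subset hTB hNA
  have hWB : (T ∪ N) ∩ B = T := Set.union_comm N T ▸ hbip.union_inter_of_subset hNA hTB
  have hW : EnteredOnlyBy G B (T ∪ N) u v := enteredOnlyBy_union_neighbors hbip hu hTB
  have hbal : ((T ∪ N) ∩ A).ncard = ((T ∪ N) ∩ B).ncard := by
    rw [hWA, hWB]
    omega
  refine ⟨T ∪ N, hbal, .inl hvT, fun huW => ?_, hW⟩
  rcases eq_empty_or_univ_of_forall_not_isEntering hG hbip hbal
    (fun a b hab => (hW a b hab).1 ▸ hab.2.1 <| huW) with h | h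
  · exact (h ▸ Set.mem_union_left N hvT : v ∈ (∅ : Set V))
  · have hyW : y ∈ (T ∪ N) ∩ B := ⟨h ▸ Set.mem_univ y, hy⟩
    exact ((hWB ▸ hyW : y ∈ T) |> hT).2 rfl

end Hall

lemma Set.ncard_union_inter_add_ncard_inter_inter {α : Type*} [Finite α] (X W S : Set α) :
    ((X ∪ W) ∩ S).ncard + (X ∩ W ∩ S).ncard = (X ∩ S).ncard + (W ∩ S).ncard := by
  rw [Set.union_inter_distrib_right, Set.inter_inter_distrib_right,
    Set.ncard_union_add_ncard_inter]

section MinimumPSet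

variable {V : Type u} [Finite V] {G : SimpleGraph V} {A B X : Set V} {x₀ y₀ : V}

/-- Otherwise `X - u - v` would be a smaller P-set, or, when `v` is the head of the edge entering
`X`, `X = {u, v}` and `v` has degree at most two. -/
lemma exists_adj_ne_of_minimal (hG : MatchingCovered G) (hbip : IsBipartition G A B)
    (hbal : (X ∩ A).ncard = (X ∩ B).ncard)
    (hmin : ∀ Y : Set V, IsPSet G A B Y → X.ncard ≤ Y.ncard)
    (h₀ : IsEntering G B X x₀ y₀) (hX : EnteredOnlyBy G B X x₀ y₀) {u v : V}
    (hu : u ∈ X) (hv : v ∈ X) (huA : u ∈ A) (huv : G.Adj u v) (hdeg : 3 ≤ degN G v) :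
    ∃ b, G.Adj u b ∧ b ∈ X ∧ b ∈ B ∧ b ≠ v := by
  by_contra! hpend
  have hvB := hbip.mem_right_of_adj huv huA
  set Z := X \ {u, v}
  have huZ : u ∉ Z := fun h => h.2 (.inl rfl)
  have hbalZ : (Z ∩ A).ncard = (Z ∩ B).ncard :=
    hbip.ncard_sdiff_pair_inter_eq hbal hu hv huA hvB
  have hZ : EnteredOnlyBy G B Z x₀ y₀ := by
    rintro a b ⟨hab, ha, ⟨hbX, hbuv⟩, hbB⟩
    by_cases haX : a ∈ X
    · have hauv : a ∈ ({u, v} : Set V) := by_contra fun h => ha ⟨haX, h⟩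
      rcases hauv with rfl | rfl
      · exact absurd (.inr (hpend b hab hbX hbB)) hbuv
      · exact absurd hvB (hbip.notMem_right (hbip.mem_left_of_adj hab hbB))
    · exact hX a b ⟨hab, haX, hbX, hbB⟩
  by_cases hy₀v : y₀ = v
  · rcases eq_empty_or_univ_of_forall_not_isEntering hG hbip hbalZ fun a b hab =>
      hab.2.2.1.2 (.inr ((hZ a b hab).2.trans hy₀v)) with hZ0 | hZ0
    · have hnbr : G.neighborSet v ⊆ {u, x₀} := by
        intro w hw
        by_cases hwX : w ∈ X
        · have hwuv : w ∈ ({u, v} : Set V) := by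
            by_contra h
            have hwZ : w ∈ Z := ⟨hwX, h⟩
            rwa [hZ0] at hwZ
          exact .inl (hwuv.resolve_right fun h => G.loopless.irrefl v (h ▸ hw))
        · exact .inr (hX w v ⟨hw.symm, hwX, hv, hvB⟩).1
      have := (Set.ncard_le_ncard hnbr).trans (Set.ncard_insert_le u {x₀})
      rw [degN, Nat.card_coe_set_eq] at hdeg
      rw [Set.ncard_singleton] at this
      omega
    · exact huZ (hZ0 ▸ Set.mem_univ u)
  · have hy₀Z : y₀ ∈ Z := ⟨h₀.2.2.1, by
      rintro (rfl | rfl); exacts [hbip.notMem_right huA h₀.2.2.2, hy₀v rfl]⟩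
    have hZP := isPSet_of_enteredOnlyBy hbip hbalZ
      ⟨h₀.1, fun h => h₀.2.1 h.1, hy₀Z, h₀.2.2.2⟩ hZ
    have hZX : Z = X := Set.eq_of_subset_of_ncard_le Set.sdiff_subset (hmin Z hZP)
    exact huZ (hZX ▸ hu)

/-- The case `y₀ ∈ W` of `false_of_enteredOnlyBy_of_minimal`. Then no edge enters `X ∪ W`, and
adding `u` to `X ∩ W` gives a set entered only by `x₀y₀`; counting leaves two possibilities:
`X ∪ W` is everything, making `Wᶜ ⊆ X` a P-set, or `insert u (X ∩ W) = X`, leaving `v` as the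
only neighbour of `u` in `X ∩ B`. -/
lemma false_of_enteredOnlyBy_of_minimal_of_mem (hG : MatchingCovered G)
    (hbip : IsBipartition G A B) (hdeg : ∀ z, 3 ≤ degN G z)
    (hbal : (X ∩ A).ncard = (X ∩ B).ncard)
    (hmin : ∀ Y : Set V, IsPSet G A B Y → X.ncard ≤ Y.ncard)
    (h₀ : IsEntering G B X x₀ y₀) (hX : EnteredOnlyBy G B X x₀ y₀) {u v : V}
    (hu : u ∈ X) (hv : v ∈ X) (huA : u ∈ A) (huv : G.Adj u v) {W : Set V}
    (hbalW : (W ∩ A).ncard = (W ∩ B).ncard) (hvW : v ∈ W) (huW : u ∉ W)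
    (hW : EnteredOnlyBy G B W u v) (hy₀W : y₀ ∈ W) : False := by
  have hvB := hbip.mem_right_of_adj huv huA
  have hx₀W : x₀ ∈ W := by_contra fun h =>
    h₀.2.1 ((hW x₀ y₀ ⟨h₀.1, h, hy₀W, h₀.2.2.2⟩).1 ▸ hu)
  have hU := hX.union hW hu
  have hUle := hU.ncard_inter_le hG hbip (Nat.le_of_succ_le (hdeg x₀))
  set Z := insert u (X ∩ W)
  have hZ : EnteredOnlyBy G B Z x₀ y₀ := hX.insert_inter hbip hW huA
  have hZle := hZ.ncard_inter_le hG hbip (Nat.le_of_succ_le (hdeg x₀))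
  have hZA : (Z ∩ A).ncard = (X ∩ W ∩ A).ncard + 1 := by
    rw [Set.insert_inter_of_mem huA, Set.ncard_insert_of_notMem fun h => huW h.1.2]
  have hZB : Z ∩ B = X ∩ W ∩ B := Set.insert_inter_of_notMem (hbip.notMem_right huA)
  have hmodA := Set.ncard_union_inter_add_ncard_inter_inter X W A
  have hmodB := Set.ncard_union_inter_add_ncard_inter_inter X W B
  rw [hZB] at hZle
  rcases (by omega : (X ∩ W ∩ B).ncard = (X ∩ W ∩ A).ncard ∨
      (X ∩ W ∩ B).ncard = (X ∩ W ∩ A).ncard + 1) with hP | hP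
  · rcases eq_empty_or_univ_of_forall_not_isEntering (Z := X ∪ W) hG hbip (by omega)
      fun a b hab => hab.2.1 (.inr ((hU a b hab).1 ▸ hx₀W)) with hU0 | hU0
    · exact (hU0 ▸ Set.mem_union_left W hu : u ∈ (∅ : Set V))
    · obtain ⟨σ, hσ, -⟩ := hG.exists_isPMInvolution huv
      have hWc : Wᶜ ⊆ X := fun z hz => (hU0 ▸ Set.mem_univ z : z ∈ X ∪ W).resolve_right hz
      have hWcP := isPSet_compl_of_enteredOnlyBy hbip (hbip.ncard_eq hσ) hbalW
        ⟨huv, huW, hvW, hvB⟩ hW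
      exact (Set.eq_of_subset_of_ncard_le hWc (hmin _ hWcP) ▸ hv : v ∈ Wᶜ) hvW
  · have hZP := isPSet_of_enteredOnlyBy hbip (by rw [hZA, hZB]; omega)
      ⟨h₀.1, by rintro (h | h); exacts [h₀.2.1 (h ▸ hu), h₀.2.1 h.1], .inr ⟨h₀.2.2.1, hy₀W⟩,
        h₀.2.2.2⟩ hZ
    have hZX : Z = X := Set.eq_of_subset_of_ncard_le (Set.insert_subset hu Set.inter_subset_left)
      (hmin Z hZP)
    obtain ⟨b, hub, hbX, hbB, hbv⟩ :=
      exists_adj_ne_of_minimal hG hbip hbal hmin h₀ hX hu hv huA huv (hdeg v)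
    have hbW : b ∈ W := ((hZX ▸ hbX : b ∈ Z).resolve_left fun h =>
      hbip.notMem_right huA (h ▸ hbB)).2
    exact hbv (hW u b ⟨hub, huW, hbW, hbB⟩).2

/-- Uncrossing `X` with a balanced set `W ∌ u` entered only by `uv`: when `y₀ ∉ W`, the set
`X ∩ W` is entered only by `uv` and `X ∪ W` only by `x₀y₀`, which forces `X ∩ W` to be balanced,
hence a P-set smaller than `X`. -/
lemma false_of_enteredOnlyBy_of_minimal (hG : MatchingCovered G)
    (hbip : IsBipartition G A B) (hdeg : ∀ z, 3 ≤ degN G z)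
    (hbal : (X ∩ A).ncard = (X ∩ B).ncard)
    (hmin : ∀ Y : Set V, IsPSet G A B Y → X.ncard ≤ Y.ncard)
    (h₀ : IsEntering G B X x₀ y₀) (hX : EnteredOnlyBy G B X x₀ y₀) {u v : V}
    (hu : u ∈ X) (hv : v ∈ X) (huA : u ∈ A) (huv : G.Adj u v) {W : Set V}
    (hbalW : (W ∩ A).ncard = (W ∩ B).ncard) (hvW : v ∈ W) (huW : u ∉ W)
    (hW : EnteredOnlyBy G B W u v) : False := by
  by_cases hy₀W : y₀ ∈ W
  · exact false_of_enteredOnlyBy_of_minimal_of_mem hG hbip hdeg hbal hmin h₀ hX hu hv huA huv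
      hbalW hvW huW hW hy₀W
  have hP : EnteredOnlyBy G B (X ∩ W) u v := by
    rintro a b ⟨hab, ha, ⟨hbX, hbW⟩, hbB⟩
    by_cases haX : a ∈ X
    · exact hW a b ⟨hab, fun h => ha ⟨haX, h⟩, hbW, hbB⟩
    · exact absurd ((hX a b ⟨hab, haX, hbX, hbB⟩).2 ▸ hbW) hy₀W
  have hPle := hP.ncard_inter_le hG hbip (Nat.le_of_succ_le (hdeg u))
  have hUle := (hX.union hW hu).ncard_inter_le hG hbip (Nat.le_of_succ_le (hdeg x₀))
  have hmodA := Set.ncard_union_inter_add_ncard_inter_inter X W A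
  have hmodB := Set.ncard_union_inter_add_ncard_inter_inter X W B
  have hPP := isPSet_of_enteredOnlyBy (Z := X ∩ W) hbip (by omega)
    ⟨huv, fun h => huW h.2, ⟨hv, hvW⟩, hbip.mem_right_of_adj huv huA⟩ hP
  have hPX : X ∩ W = X := Set.eq_of_subset_of_ncard_le Set.inter_subset_left (hmin _ hPP)
  rw [← hPX] at hu
  exact huW hu.2

theorem matchingCovered_deleteEdges_of_minimal (hG : MatchingCovered G)
    (hbip : IsBipartition G A B) (hdeg : ∀ z, 3 ≤ degN G z)
    (hbal : (X ∩ A).ncard = (X ∩ B).ncard)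
    (hmin : ∀ Y : Set V, IsPSet G A B Y → X.ncard ≤ Y.ncard)
    (h₀ : IsEntering G B X x₀ y₀) (hX : EnteredOnlyBy G B X x₀ y₀) {a b : V}
    (ha : a ∈ X) (hb : b ∈ X) (hab : G.Adj a b) :
    MatchingCovered (G.deleteEdges {s(a, b)}) := by
  wlog haA : a ∈ A generalizing a b
  · rw [Sym2.eq_swap]
    exact this hb ha hab.symm (hbip.mem_left_of_adj hab.symm
      ((hbip.mem_or_mem a).resolve_left haA))
  have hdeg₂ := Nat.le_of_succ_le (hdeg a)
  refine (hbip.mono (deleteEdges_le _)).matchingCovered_of_forall_adj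
    (hG.connected_deleteEdges_s11 hbip haA hab hdeg₂) hG.2.1 fun x y hx hxy => ?_
  by_contra! hno
  obtain ⟨W, hbalW, hbW, haW, hW⟩ :=
    exists_enteredOnlyBy_of_forall_isPMInvolution hG hbip haA hab hdeg₂ hx hxy hno
  exact false_of_enteredOnlyBy_of_minimal hG hbip hdeg hbal hmin h₀ hX ha hb haA hab
    hbalW hbW haW hW

end MinimumPSet

theorem stmt11_general {V : Type u} [Finite V] (G : SimpleGraph V) (A B : Set V)
    (hG : MatchingCovered G) (hbip : IsBipartition G A B)
    (hdeg : ∀ v : V, 3 ≤ degN G v)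
    (X : Set V) (hX : IsPSet G A B X)
    (hmin : ∀ Y : Set V, IsPSet G A B Y → X.ncard ≤ Y.ncard) :
    ∀ a ∈ X, ∀ b ∈ X, G.Adj a b → Removable G s(a, b) := by
  intro a ha b hb hab
  refine ⟨hab, ?_⟩
  rcases hX.exists_enteredOnlyBy hbip with ⟨x₀, y₀, h₀, hX₀⟩ | ⟨x₀, y₀, h₀, hX₀⟩
  · exact matchingCovered_deleteEdges_of_minimal hG hbip.symm hdeg hX.1.symm
      (fun Y hY => hmin Y hY.symm) h₀ hX₀ ha hb hab
  · exact matchingCovered_deleteEdges_of_minimal hG hbip hdeg hX.1 hmin h₀ hX₀ ha hb hab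

theorem stmt11 {V : Type u} [Finite V] (G : SimpleGraph V) (A B : Set V)
    (hG : MatchingCovered G) (hbip : IsBipartition G A B)
    (hcard : 4 ≤ Nat.card V) (hdeg : ∀ v : V, 3 ≤ degN G v)
    (X : Set V) (hX : IsPSet G A B X)
    (hmin : ∀ Y : Set V, IsPSet G A B Y → X.ncard ≤ Y.ncard) :
    ∀ a ∈ X, ∀ b ∈ X, G.Adj a b → Removable G s(a, b) :=
  stmt11_general G A B hG hbip hdeg X hX hmin
end
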